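/- arXiv:2001.08977 — 2 statements merged into one kernel-verified Lean document; each statement's English description precedes it below -/
import Mathlib

section
/- Let G be a finite simple graph with vertices s and t, let P₁ and P₂ be shortest s-t paths of G, and let u, v be vertices lying on both P₁ and P₂. Then u appears before v in the vertex sequence of P₁ if and only if u appears before v in the vertex sequence of P₂ (equivalently, [u, v] is a sublist of the vertex sequence of P₁ if and only if it is a sublist of the vertex sequence of P₂). -/
/-!
Every tail of a shortest walk to `t` is again shortest, so the distance to `t` strictly
decreases along the vertex sequence of a shortest walk. The relative order of two vertices on any
shortest `s`-`t` path is therefore dictated by their distances to `t`, which do not depend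
on the path.
-/

theorem List.pair_sublist_iff_of_pairwise {α : Type*} {r : α → α → Prop}
    (hr : ∀ ⦃x y⦄, r x y → ¬r y x) {l : List α} (hl : l.Pairwise r) {u v : α}
    (hu : u ∈ l) (hv : v ∈ l) : List.Sublist [u, v] l ↔ r u v := by
  refine ⟨fun h => List.pairwise_pair.mp (hl.sublist h), fun huv => ?_⟩
  induction l with
  | nil => simp at hu
  | cons a l ih =>
    obtain ⟨ha, hl⟩ := List.pairwise_cons.mp hl
    rcases List.mem_cons.mp hu with rfl | hu
    · have hv : v ∈ l := (List.mem_cons.mp hv).resolve_left fun hvu => hr huv (hvu ▸ huv)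
      exact List.cons_sublist_cons.mpr (List.singleton_sublist.mpr hv)
    · have hv : v ∈ l := (List.mem_cons.mp hv).resolve_left fun hva => hr huv (hva ▸ ha u hu)
      exact (ih hl hu hv).cons a

namespace SimpleGraph.Walk

variable {V : Type*} {G : SimpleGraph V}

theorem support_pairwise_dist_gt_of_length_eq_dist {a b : V} (p : G.Walk a b)
    (hp : p.length = G.dist a b) : p.support.Pairwise fun x y => G.dist y b < G.dist x b := by
  induction p with
  | nil => simp
  | @cons a c b hac q ih =>
    have hq : q.length = G.dist c b :=
      length_eq_dist_of_subwalk hp (q.isSubwalk_cons hac)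
    have hc : q.support = c :: q.support.tail := q.cons_tail_support.symm
    have ihq := ih hq
    rw [hc, List.pairwise_cons] at ihq
    rw [support_cons, List.pairwise_cons]
    refine ⟨fun y hy => ?_, ih hq⟩
    have hyc : G.dist y b ≤ G.dist c b := by
      rw [hc] at hy
      rcases List.mem_cons.mp hy with rfl | hy
      · exact le_rfl
      · exact (ihq.1 y hy).le
    rw [← hp, length_cons]
    omega

end SimpleGraph.Walk

theorem shortest_paths_same_order_general {V : Type*} (G : SimpleGraph V)
    (s t : V)
    (p₁ p₂ : G.Walk s t) (h₁ : p₁.length = G.dist s t) (h₂ : p₂.length = G.dist s t)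
    (u v : V) (hu₁ : u ∈ p₁.support) (hu₂ : u ∈ p₂.support)
    (hv₁ : v ∈ p₁.support) (hv₂ : v ∈ p₂.support) :
    (List.Sublist [u, v] p₁.support ↔ List.Sublist [u, v] p₂.support) := by
  have hasymm : ∀ ⦃x y : V⦄, G.dist y t < G.dist x t → ¬G.dist x t < G.dist y t :=
    fun _ _ h => h.asymm
  rw [List.pair_sublist_iff_of_pairwise hasymm
      (p₁.support_pairwise_dist_gt_of_length_eq_dist h₁) hu₁ hv₁,
    List.pair_sublist_iff_of_pairwise hasymm
      (p₂.support_pairwise_dist_gt_of_length_eq_dist h₂) hu₂ hv₂]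

/-- Two vertices lying on two shortest `s`-`t` paths appear in the same relative order
on both paths: `[u, v]` is a sublist of the vertex sequence of `P₁` iff it is a sublist
of the vertex sequence of `P₂`. -/
theorem shortest_paths_same_order {V : Type*} [Fintype V] (G : SimpleGraph V)
    (s t : V) (hreach : G.Reachable s t)
    (p₁ p₂ : G.Walk s t) (h₁ : p₁.length = G.dist s t) (h₂ : p₂.length = G.dist s t)
    (u v : V) (hu₁ : u ∈ p₁.support) (hu₂ : u ∈ p₂.support)
    (hv₁ : v ∈ p₁.support) (hv₂ : v ∈ p₂.support) :
    (List.Sublist [u, v] p₁.support ↔ List.Sublist [u, v] p₂.support) :=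
  shortest_paths_same_order_general G s t p₁ p₂ h₁ h₂ u v hu₁ hu₂ hv₁ hv₂
end

section
/- Let G = (V, E) be a DAG on a finite vertex set with source s and destination t in which every vertex and every edge lies on some directed s-t path. Then the number of directed s-t paths of G is at least 1 + Σ_{v ∈ V∖{t}} (deg⁺(v) − 1); equivalently, it is at least |E| − |V| + 2. -/
/-!
Choose for every `v ≠ t` a default out-neighbour `f v` (it exists because `v` lies on an
`s`-`t` path), and let `C u` be the walk from `u` that follows `f`; in a DAG it reaches `t`
without repeating a vertex. Besides the all-default path `C s`, every non-default edge `(v, u)`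
gives the `s`-`t` path that runs along some `s`-`t` path through `(v, u)` up to `v` and then
continues along `C u`. These paths are pairwise distinct, since `(v, u)` is recovered as the last
step of the path that does not follow `f`. There are `Σ_{v ≠ t} (deg⁺ v - 1)` non-default edges,
and `deg⁺ t = 0` turns this count into `|E| - |V| + 1`.
-/

/-- `IsPathList E s t l` means that `l` is a directed `s`-`t` path of the directed graph
`E`: a list of pairwise distinct vertices starting at `s` and ending at `t` in which
every pair of consecutive vertices is joined by an edge of `E`. -/
def IsPathList {V : Type*} (E : V → V → Prop) (s t : V) (l : List V) : Prop :=
  l.Chain' E ∧ l.head? = some s ∧ l.getLast? = some t ∧ l.Nodup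

open List Relation Finset

section PathLists

variable {V : Type*} {E : V → V → Prop}

theorem List.IsChain.nodup_of_acyclic (hdag : ∀ v, ¬ TransGen E v v) {l : List V}
    (h : l.IsChain E) : l.Nodup :=
  (isChain_iff_pairwise.mp (h.imp fun _ _ => TransGen.single)).imp
    fun {a b} (hab : TransGen E a b) (heq : a = b) => hdag b (heq ▸ hab)

namespace IsPathList

variable {s t : V} {l : List V}

theorem of_isChain (hdag : ∀ v, ¬ TransGen E v v) (hc : l.IsChain E)
    (hs : l.head? = some s) (ht : l.getLast? = some t) : IsPathList E s t l :=
  ⟨hc, hs, ht, hc.nodup_of_acyclic hdag⟩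

theorem exists_adj_of_mem (hl : IsPathList E s t l) {v : V} (hv : v ∈ l) (hvt : v ≠ t) :
    ∃ u, E v u := by
  obtain ⟨p, q, rfl⟩ := append_of_mem hv
  cases q with
  | nil => exact absurd (by simpa using hl.2.2.1) hvt
  | cons u r =>
    exact ⟨u, (isChain_cons_cons.mp (hl.1.infix (⟨p, r, by simp⟩ : [v, u] <:+: _))).1⟩

theorem not_infix_target_cons (hl : IsPathList E s t l) (b : V) : ¬ [t, b] <:+: l := by
  rintro ⟨p, q, rfl⟩
  obtain ⟨-, -, hlast, hnd⟩ := hl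
  have ht : t ∈ b :: q := mem_of_getLast? (by simpa using hlast)
  simp_all [nodup_append]

theorem splice (hdag : ∀ v, ¬ TransGen E v v) {p q r : List V} {v u : V}
    (hl : IsPathList E s t (p ++ v :: u :: q)) (hc : IsPathList E u t (u :: r)) :
    IsPathList E s t (p ++ v :: u :: r) := by
  obtain ⟨hp, hvuq, hjoin⟩ := isChain_append.mp hl.1
  refine of_isChain hdag (isChain_append.mpr ⟨hp, ?_, hjoin⟩) ?_ ?_
  · exact isChain_cons_cons.mpr ⟨(isChain_cons_cons.mp hvuq).1, hc.1⟩
  · simpa [head?_append] using hl.2.1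
  · rw [getLast?_append, getLast?_cons_cons, hc.2.2.1]; rfl

end IsPathList

theorem finite_setOf_isPathList [Fintype V] (s t : V) : {l | IsPathList E s t l}.Finite :=
  (List.finite_length_le V (Fintype.card V)).subset fun _ hl => hl.2.2.2.length_le_card

section FollowUntil

variable [DecidableEq V] {f : V → V} {t : V}

def followUntil (f : V → V) (t : V) : ℕ → V → List V
  | 0, v => [v]
  | n + 1, v => if v = t then [v] else v :: followUntil f t n (f v)

theorem followUntil_eq_cons_tail (n : ℕ) (v : V) :
    followUntil f t n v = v :: (followUntil f t n v).tail := by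
  cases n with
  | zero => rfl
  | succ n => unfold followUntil; split <;> rfl

theorem isChain_followUntil {R : V → V → Prop} (hf : ∀ v, v ≠ t → R v (f v)) :
    ∀ n v, (followUntil f t n v).IsChain R
  | 0, _ => isChain_singleton _
  | n + 1, v => by
    unfold followUntil
    split
    · exact isChain_singleton _
    · rw [followUntil_eq_cons_tail]
      exact isChain_cons_cons.mpr ⟨hf v ‹_›, followUntil_eq_cons_tail (f := f) n (f v) ▸
        isChain_followUntil hf n (f v)⟩

theorem length_followUntil_of_getLast?_ne :
    ∀ n v, (followUntil f t n v).getLast? ≠ some t → (followUntil f t n v).length = n + 1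
  | 0, _, _ => rfl
  | n + 1, v, h => by
    by_cases hv : v = t
    · simp [followUntil, hv] at h
    · rw [followUntil, if_neg hv] at h ⊢
      rw [followUntil_eq_cons_tail n (f v), getLast?_cons_cons,
        ← followUntil_eq_cons_tail] at h
      simp [length_followUntil_of_getLast?_ne n (f v) h]

theorem isPathList_followUntil [Fintype V] (hdag : ∀ v, ¬ TransGen E v v)
    (hf : ∀ v, v ≠ t → E v (f v)) (v : V) :
    IsPathList E v t (followUntil f t (Fintype.card V) v) := by
  have hc := isChain_followUntil hf (Fintype.card V) v
  refine IsPathList.of_isChain hdag hc (by rw [followUntil_eq_cons_tail]; rfl) ?_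
  -- a walk that has not reached `t` has length `card V + 1`, too long to be duplicate-free
  by_contra h
  have := (hc.nodup_of_acyclic hdag).length_le_card
  rw [length_followUntil_of_getLast?_ne _ _ h] at this
  omega

end FollowUntil

section StepOff

variable {f : V → V} {v u v' u' : V} {r r' : List V}

theorem eq_and_eq_of_cons_cons_suffix (h : v :: u :: r <:+ v' :: u' :: r')
    (hc : (u' :: r').IsChain (fun a b => b = f a)) (hu : u ≠ f v) : v = v' ∧ u = u' := by
  rcases suffix_cons_iff.mp h with h | h
  · simp_all
  · exact absurd (isChain_cons_cons.mp (hc.suffix h)).1 hu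

theorem eq_and_eq_of_append_cons_cons_eq {p p' : List V}
    (h : p ++ v :: u :: r = p' ++ v' :: u' :: r')
    (hc : (u :: r).IsChain (fun a b => b = f a)) (hc' : (u' :: r').IsChain (fun a b => b = f a))
    (hu : u ≠ f v) (hu' : u' ≠ f v') : v = v' ∧ u = u' := by
  rcases suffix_or_suffix_of_suffix (suffix_append p _) (h ▸ suffix_append p' _) with h | h
  · exact eq_and_eq_of_cons_cons_suffix h hc' hu
  · obtain ⟨rfl, rfl⟩ := eq_and_eq_of_cons_cons_suffix h hc hu'
    exact ⟨rfl, rfl⟩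

theorem ne_append_cons_cons_of_isChain {l p : List V} (hl : l.IsChain (fun a b => b = f a))
    (hu : u ≠ f v) : l ≠ p ++ v :: u :: r := by
  rintro rfl
  exact hu (isChain_cons_cons.mp (hl.infix (⟨p, r, by simp⟩ : [v, u] <:+: _))).1

end StepOff

theorem exists_forall_ne_adj_apply {s t : V}
    (hvert : ∀ v, ∃ l, IsPathList E s t l ∧ v ∈ l) :
    ∃ f : V → V, ∀ v, v ≠ t → E v (f v) := by
  refine Classical.skolem (p := fun v u => v ≠ t → E v u) |>.mp fun v => ?_
  by_cases hv : v = t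
  · exact ⟨v, absurd hv⟩
  · obtain ⟨l, hl, hvl⟩ := hvert v
    exact (hl.exists_adj_of_mem hvl hv).imp fun _ h _ => h

section Counting

variable [Fintype V] [DecidableEq V] [DecidableRel E] {s t : V}

theorem card_sigma_erase_apply {f : V → V} (hf : ∀ v, v ≠ t → E v (f v)) :
    (((univ.erase t).sigma fun v => (univ.filter (E v)).erase (f v)).card : ℤ) =
      ∑ v ∈ univ.erase t, ((#{u | E v u} : ℤ) - 1) := by
  rw [card_sigma, Nat.cast_sum]
  refine sum_congr rfl fun v hv => ?_
  have hfv : f v ∈ ({u | E v u} : Finset V) := by simpa using hf v (ne_of_mem_erase hv)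
  rw [card_erase_of_mem hfv, Nat.cast_pred (card_pos.mpr ⟨_, hfv⟩)]

theorem one_add_sum_le_ncard_isPathList (hdag : ∀ v, ¬ TransGen E v v)
    (hvert : ∀ v, ∃ l, IsPathList E s t l ∧ v ∈ l)
    (hedge : ∀ a b, E a b → ∃ l, IsPathList E s t l ∧ [a, b] <:+: l) :
    1 + ∑ v ∈ univ.erase t, ((#{u | E v u} : ℤ) - 1) ≤ {l | IsPathList E s t l}.ncard := by
  obtain ⟨f, hf⟩ := exists_forall_ne_adj_apply hvert
  set C := followUntil f t (Fintype.card V)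
  have hCcons : ∀ u, C u = u :: (C u).tail := followUntil_eq_cons_tail _
  have hCpath : ∀ u, IsPathList E u t (C u) := isPathList_followUntil hdag hf
  have hCf : ∀ u, (C u).IsChain fun a b => b = f a :=
    isChain_followUntil (R := fun a b => b = f a) (fun _ _ => rfl) _
  have hdetour : ∀ v u, ∃ p, E v u → IsPathList E s t (p ++ v :: u :: (C u).tail) := by
    intro v u
    by_cases h : E v u
    · obtain ⟨l, hl, p, q, rfl⟩ := hedge v u h
      exact ⟨p, fun _ => IsPathList.splice hdag (by simpa using hl) (hCcons u ▸ hCpath u)⟩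
    · exact ⟨[], fun h' => absurd h' h⟩
  choose pre hpre using hdetour
  let D := (univ.erase t).sigma fun v => (univ.filter (E v)).erase (f v)
  have hD : ∀ x, x ∈ D ↔ x.1 ≠ t ∧ x.2 ≠ f x.1 ∧ E x.1 x.2 := by simp [D]
  let g : Option (Σ _ : V, V) → List V :=
    fun o => o.elim (C s) fun x => pre x.1 x.2 ++ x.1 :: x.2 :: (C x.2).tail
  have hg : ∀ o ∈ (D.insertNone : Set _), IsPathList E s t (g o) := by
    rintro (_ | x) hx
    · exact hCpath s
    · exact hpre _ _ ((hD x).mp (by simpa using hx)).2.2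
  have hinj : Set.InjOn g D.insertNone := by
    rintro (_ | ⟨v, u⟩) hx (_ | ⟨v', u'⟩) hy hxy
    · rfl
    · exact absurd hxy (ne_append_cons_cons_of_isChain (hCf s)
        ((hD _).mp (by simpa using hy)).2.1)
    · exact absurd hxy.symm (ne_append_cons_cons_of_isChain (hCf s)
        ((hD _).mp (by simpa using hx)).2.1)
    · obtain ⟨rfl, rfl⟩ :=
        eq_and_eq_of_append_cons_cons_eq hxy (hCcons u ▸ hCf u) (hCcons u' ▸ hCf u')
        ((hD _).mp (by simpa using hx)).2.1 ((hD _).mp (by simpa using hy)).2.1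
      rfl
  calc 1 + ∑ v ∈ univ.erase t, ((#{u | E v u} : ℤ) - 1) = (D.insertNone.card : ℤ) := by
        rw [card_insertNone, Nat.cast_succ, card_sigma_erase_apply hf, add_comm]
    _ ≤ {l | IsPathList E s t l}.ncard := by
        rw [← Set.ncard_coe_finset]
        exact_mod_cast Set.ncard_le_ncard_of_injOn g hg hinj (finite_setOf_isPathList s t)

end Counting

theorem sum_erase_card_filter_sub_one [Fintype V] [DecidableEq V] [DecidableRel E] {t : V}
    (ht : ∀ u, ¬ E t u) :
    ∑ v ∈ univ.erase t, ((#{u | E v u} : ℤ) - 1) =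
      #{p : V × V | E p.1 p.2} - Fintype.card V + 1 := by
  have hdeg : ∑ v, #{u | E v u} = #{p : V × V | E p.1 p.2} := by
    simp only [card_filter, Fintype.sum_prod_type]
  have hdeg_t : #{u | E t u} = 0 := by simp [ht]
  rw [sum_sub_distrib, sum_erase_eq_sub (mem_univ t), sum_const, card_erase_of_mem (mem_univ t),
    card_univ, ← Nat.cast_sum, hdeg, hdeg_t, nsmul_one,
    Nat.cast_pred (Fintype.card_pos_iff.mpr ⟨t⟩), Nat.cast_zero]
  ring

end PathLists

/-- In a DAG in which every vertex and every edge lies on some directed `s`-`t` path, the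
number of directed `s`-`t` paths is at least `1 + Σ_{v ≠ t} (deg⁺(v) − 1)`; equivalently,
at least `|E| − |V| + 2`. -/
theorem dag_num_paths_lower_bound {V : Type*} [Fintype V] [DecidableEq V]
    (E : V → V → Prop) [DecidableRel E]
    (hdag : ∀ v, ¬ Relation.TransGen E v v) (s t : V)
    (hvert : ∀ v : V, ∃ l, IsPathList E s t l ∧ v ∈ l)
    (hedge : ∀ a b : V, E a b → ∃ l, IsPathList E s t l ∧ [a, b] <:+: l) :
    (1 + ∑ v ∈ Finset.univ.erase t,
        ((Finset.univ.filter (fun u => E v u)).card - 1 : ℤ)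
      ≤ ({l : List V | IsPathList E s t l}.ncard : ℤ)) ∧
    ((Finset.univ.filter (fun p : V × V => E p.1 p.2)).card - (Fintype.card V : ℤ) + 2
      ≤ ({l : List V | IsPathList E s t l}.ncard : ℤ)) := by
  have hcount := one_add_sum_le_ncard_isPathList hdag hvert hedge
  have hsum := sum_erase_card_filter_sub_one (E := E) (t := t) fun b hb =>
    let ⟨_, hl, hinf⟩ := hedge t b hb
    hl.not_infix_target_cons b hinf
  exact ⟨hcount, by linarith⟩
end
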